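/- arXiv:2509.21169 — 2 statements merged into one kernel-verified Lean document; each statement's English description precedes it below -/
import Mathlib

section
/- For every real number a with −1 < a < −1/2 and all real u, v, one has ∫_ℝ (u−y)₊^a (v−y)₊^a dy = B(−1−2a, a+1) · |u−v|^{2a+1}, where B denotes the Beta function and x₊^a = x^a if x > 0 and 0 otherwise. -/
/-!
For `v < u` only `y < v` contributes, and the substitution `y = v - c s / (1 - s)` with
`c = u - v` maps `(0, 1)` onto `(-∞, v)`, turning the integrand into
`c ^ (2a + 1) (1 - s) ^ (-2a - 2) s ^ a`, i.e. a Beta integrand after `s ↦ 1 - s`.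
For `u = v` the integrand is `(u - y) ^ (2a)` near `u`, which is not integrable since
`2a ≤ -1`, so both sides vanish.
-/

open MeasureTheory

/-- `x₊^a`: equals `x^a` when `x > 0` and `0` otherwise. -/
noncomputable def plusPow (x a : ℝ) : ℝ := if 0 < x then x ^ a else 0

open Set

lemma plusPow_of_pos {x : ℝ} (hx : 0 < x) (a : ℝ) : plusPow x a = x ^ a := if_pos hx

lemma plusPow_of_nonpos {x : ℝ} (hx : x ≤ 0) (a : ℝ) : plusPow x a = 0 :=
  if_neg hx.not_gt

lemma plusPow_mul_plusPow_eq_indicator {u v : ℝ} (hvu : v ≤ u) (a : ℝ) :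
    (fun y => plusPow (u - y) a * plusPow (v - y) a) =
      (Iio v).indicator (fun y => (u - y) ^ a * (v - y) ^ a) := by
  funext y
  by_cases hy : y < v
  · rw [indicator_of_mem (show y ∈ Iio v from hy), plusPow_of_pos (by linarith),
      plusPow_of_pos (by linarith)]
  · rw [indicator_of_notMem (show y ∉ Iio v from hy),
      plusPow_of_nonpos (show v - y ≤ 0 by linarith), mul_zero]

lemma not_integrable_plusPow_mul_self {a : ℝ} (ha : a ≤ -(1/2)) (u : ℝ) :
    ¬ Integrable (fun y => plusPow (u - y) a * plusPow (u - y) a) := by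
  intro h
  have hpow : IntegrableOn (fun x : ℝ => x ^ (a + a)) (Ioo 0 1) := by
    refine (h.comp_sub_left u).integrableOn.congr_fun (fun x hx => ?_) measurableSet_Ioo
    simp only [sub_sub_cancel, plusPow_of_pos hx.1, Real.rpow_add hx.1]
  rw [intervalIntegral.integrableOn_Ioo_rpow_iff zero_lt_one] at hpow
  linarith

section Substitution

variable {c : ℝ} (v : ℝ)

lemma hasDerivAt_sub_mul_div_one_sub {s : ℝ} (hs : s ≠ 1) :
    HasDerivAt (fun x => v - c * x / (1 - x)) (-(c / (1 - s) ^ 2)) s := by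
  have hs' : 1 - s ≠ 0 := sub_ne_zero.2 hs.symm
  have h := (((hasDerivAt_id s).const_mul c).div
    ((hasDerivAt_id s).const_sub 1) hs').const_sub v
  refine (h : HasDerivAt (fun x => v - c * x / (1 - x)) _ s).congr_deriv ?_
  simp only [id]
  field_simp
  ring

lemma image_sub_mul_div_one_sub_Ioo (hc : 0 < c) :
    (fun s => v - c * s / (1 - s)) '' Ioo 0 1 = Iio v := by
  ext y
  constructor
  · rintro ⟨s, ⟨hs₀, hs₁⟩, rfl⟩
    exact sub_lt_self v (div_pos (mul_pos hc hs₀) (sub_pos.2 hs₁))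
  · intro hy
    have hy : 0 < v - y := sub_pos.2 hy
    refine ⟨(v - y) / (v - y + c), ⟨by positivity, (div_lt_one (by positivity)).2
      (by linarith)⟩, ?_⟩
    have hd : v - y + c ≠ 0 := by positivity
    show v - c * ((v - y) / (v - y + c)) / (1 - (v - y) / (v - y + c)) = y
    rw [one_sub_div hd, add_sub_cancel_left, mul_div_assoc', div_div_div_cancel_right₀ hd,
      mul_div_cancel_left₀ _ hc.ne']
    ring

lemma injOn_sub_mul_div_one_sub (hc : 0 < c) :
    InjOn (fun s => v - c * s / (1 - s)) (Ioo 0 1) := by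
  intro s ⟨_, hs⟩ t ⟨_, ht⟩ hst
  have hs : 1 - s ≠ 0 := by linarith
  have ht : 1 - t ≠ 0 := by linarith
  have h : c * s * (1 - t) = c * t * (1 - s) := by
    simp only at hst
    field_simp at hst
    linarith
  have : c * (s - t) = 0 := by linarith
  exact sub_eq_zero.1 ((mul_eq_zero.1 this).resolve_left hc.ne')

end Substitution

lemma div_sq_mul_rpow_mul_rpow_eq {a c s : ℝ} (hc : 0 < c) (hs : s ∈ Ioo (0:ℝ) 1) :
    c / (1 - s) ^ 2 * ((c / (1 - s)) ^ a * (c * s / (1 - s)) ^ a) =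
      c ^ (2*a + 1) * ((1 - s) ^ (-1 - 2*a - 1) * s ^ (a + 1 - 1)) := by
  obtain ⟨hs₀, hs₁⟩ := hs
  have hs : 0 < 1 - s := sub_pos.2 hs₁
  rw [Real.div_rpow hc.le hs.le, Real.div_rpow (by positivity) hs.le,
    Real.mul_rpow hc.le hs₀.le, add_sub_cancel_right,
    show 2*a + 1 = a + a + 1 by ring, Real.rpow_add hc, Real.rpow_add hc, Real.rpow_one,
    show -1 - 2*a - 1 = -a + -a + -2 by ring, Real.rpow_add hs, Real.rpow_add hs,
    Real.rpow_neg hs.le, Real.rpow_neg hs.le, Real.rpow_two]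
  have : (1 - s) ^ a ≠ 0 := (Real.rpow_pos_of_pos hs a).ne'
  field_simp

lemma integral_Iio_rpow_mul_rpow {c : ℝ} (hc : 0 < c) (a v : ℝ) :
    ∫ y in Iio v, (v + c - y) ^ a * (v - y) ^ a =
      c ^ (2*a + 1) * ∫ s in Ioo (0:ℝ) 1, (1 - s) ^ (-1 - 2*a - 1) * s ^ (a + 1 - 1) := by
  rw [← image_sub_mul_div_one_sub_Ioo v hc,
    integral_image_eq_integral_abs_deriv_smul measurableSet_Ioo
      (fun s hs => (hasDerivAt_sub_mul_div_one_sub v hs.2.ne).hasDerivWithinAt)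
      (injOn_sub_mul_div_one_sub v hc),
    ← integral_const_mul]
  refine setIntegral_congr_fun measurableSet_Ioo fun s hs => ?_
  have hs' : 0 < 1 - s := sub_pos.2 hs.2
  have hu : v + c - (v - c * s / (1 - s)) = c / (1 - s) := by
    field_simp
    ring
  rw [hu, sub_sub_cancel, abs_neg, abs_of_pos (by positivity), smul_eq_mul,
    div_sq_mul_rpow_mul_rpow_eq hc hs]

lemma intervalIntegral_beta_eq_integral_Ioo (p q : ℝ) :
    ∫ t in (0:ℝ)..1, t ^ (p - 1) * (1 - t) ^ (q - 1) =
      ∫ s in Ioo (0:ℝ) 1, (1 - s) ^ (p - 1) * s ^ (q - 1) := by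
  have h := intervalIntegral.integral_comp_sub_left
    (fun t : ℝ => t ^ (p - 1) * (1 - t) ^ (q - 1)) 1 (a := 0) (b := 1)
  simp only [sub_sub_cancel, sub_zero, sub_self] at h
  rw [← h, intervalIntegral.integral_of_le zero_le_one, integral_Ioc_eq_integral_Ioo]

theorem integral_plusPow_mul_plusPow_general (a : ℝ) (ha₂ : a < -(1/2))
    (u v : ℝ) :
    ∫ y : ℝ, plusPow (u - y) a * plusPow (v - y) a =
      (∫ t in (0:ℝ)..1, t ^ (-1 - 2*a - 1) * (1 - t) ^ (a + 1 - 1)) *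
        |u - v| ^ (2*a + 1) := by
  wlog hvu : v ≤ u with H
  · have := H a ha₂ v u (le_of_not_ge hvu)
    simp_rw [mul_comm (plusPow (v - _) a)] at this
    rwa [abs_sub_comm] at this
  obtain rfl | hvu := hvu.eq_or_lt
  · rw [integral_undef (not_integrable_plusPow_mul_self ha₂.le v), sub_self, abs_zero,
      Real.zero_rpow (by linarith), mul_zero]
  have hc : 0 < u - v := sub_pos.2 hvu
  have h := integral_Iio_rpow_mul_rpow hc a v
  rw [add_sub_cancel] at h
  rw [plusPow_mul_plusPow_eq_indicator hvu.le, integral_indicator measurableSet_Iio, h,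
    intervalIntegral_beta_eq_integral_Ioo, abs_of_pos hc, mul_comm]

/-- For `-1 < a < -1/2` and all real `u, v`,
`∫_ℝ (u−y)₊^a (v−y)₊^a dy = B(−1−2a, a+1) · |u−v|^{2a+1}`,
where `B(p,q) = ∫₀¹ t^{p−1}(1−t)^{q−1} dt` is the Euler Beta function. -/
theorem integral_plusPow_mul_plusPow (a : ℝ) (ha₁ : -1 < a) (ha₂ : a < -(1/2))
    (u v : ℝ) :
    ∫ y : ℝ, plusPow (u - y) a * plusPow (v - y) a =
      (∫ t in (0:ℝ)..1, t ^ (-1 - 2*a - 1) * (1 - t) ^ (a + 1 - 1)) *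
        |u - v| ^ (2*a + 1) :=
  integral_plusPow_mul_plusPow_general a ha₂ u v
end

section
/- Let H ∈ (1/2, 1) and α = 2H − 2 ∈ (−1, 0). For all 0 ≤ s ≤ t, ∫₀^s ∫₀^t |u−v|^{2H−2} dv du = (s^{2H} + t^{2H} − (t−s)^{2H}) / (2H(2H−1)). -/
open intervalIntegral Real MeasureTheory

lemma inner_int (α : ℝ) (hα : -1 < α) (hα' : α < 0) (u t : ℝ) (hu : 0 ≤ u) (hut : u ≤ t) :
    (∫ v in (0:ℝ)..t, |u - v| ^ α) =
      (u ^ (α+1) + (t - u) ^ (α+1)) / (α+1) := by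
  have hα1 : (0:ℝ) < α + 1 := by linarith
  have hz : (0:ℝ) ^ (α+1) = 0 := Real.zero_rpow (by linarith)
  have h1 : (∫ v in (0:ℝ)..u, |u - v| ^ α) = u ^ (α+1) / (α+1) := by
    rw [intervalIntegral.integral_congr (g := fun v => (u - v) ^ α)]
    · rw [intervalIntegral.integral_comp_sub_left (fun x => x ^ α) u]
      rw [show u - u = 0 by ring, show u - 0 = u by ring, integral_rpow (Or.inl hα), hz]
      ring
    · intro v hv
      rw [Set.uIcc_of_le hu] at hv
      simp only
      rw [abs_of_nonneg (by linarith [hv.2])]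
  have h2 : (∫ v in u..t, |u - v| ^ α) = (t - u) ^ (α+1) / (α+1) := by
    rw [intervalIntegral.integral_congr (g := fun v => (v - u) ^ α)]
    · rw [intervalIntegral.integral_comp_sub_right (fun x => x ^ α) u]
      rw [show u - u = 0 by ring, integral_rpow (Or.inl hα), hz]
      ring
    · intro v hv
      rw [Set.uIcc_of_le hut] at hv
      simp only
      rw [abs_sub_comm, abs_of_nonneg (by linarith [hv.1])]
  have i1 : IntervalIntegrable (fun v => |u - v| ^ α) volume 0 u := by
    have h : IntervalIntegrable (fun v => (u - v) ^ α) volume 0 u := by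
      have := ((intervalIntegrable_rpow' (a := 0) (b := u) hα).comp_sub_left u).symm
      simpa using this
    apply h.congr
    intro v hv
    rw [Set.uIoc_of_le hu] at hv
    show (u - v) ^ α = |u - v| ^ α
    rw [abs_of_nonneg (by linarith [hv.2])]
  have i2 : IntervalIntegrable (fun v => |u - v| ^ α) volume u t := by
    have h : IntervalIntegrable (fun v => (v - u) ^ α) volume u t := by
      have := ((intervalIntegrable_rpow' (a := u - u) (b := t - u) hα).comp_sub_right u)
      simpa using this
    apply h.congr
    intro v hv
    rw [Set.uIoc_of_le hut] at hv
    show (v - u) ^ α = |u - v| ^ α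
    rw [abs_sub_comm, abs_of_nonneg (by linarith [hv.1])]
  rw [← intervalIntegral.integral_add_adjacent_intervals i1 i2, h1, h2]
  ring

/-- For `H ∈ (1/2, 1)` and `0 ≤ s ≤ t`,
`∫₀^s ∫₀^t |u − v|^{2H−2} dv du = (s^{2H} + t^{2H} − (t−s)^{2H}) / (2H(2H−1))`. -/
theorem double_integral_abs_rpow (H : ℝ) (hH₁ : 1/2 < H) (hH₂ : H < 1)
    (s t : ℝ) (hs : 0 ≤ s) (hst : s ≤ t) :
    (∫ u in (0:ℝ)..s, ∫ v in (0:ℝ)..t, |u - v| ^ (2*H - 2)) =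
      (s ^ (2*H) + t ^ (2*H) - (t - s) ^ (2*H)) / (2*H*(2*H - 1)) := by
  have hα : (-1:ℝ) < 2*H - 2 := by linarith
  have hα' : 2*H - 2 < 0 := by linarith
  have hβ : (-1:ℝ) < 2*H - 1 := by linarith
  have hHne : (2*H : ℝ) ≠ 0 := by positivity
  have hH1ne : (2*H - 1 : ℝ) ≠ 0 := by linarith
  have hstep : (∫ u in (0:ℝ)..s, ∫ v in (0:ℝ)..t, |u - v| ^ (2*H - 2)) =
      ∫ u in (0:ℝ)..s, (u ^ (2*H - 1) + (t - u) ^ (2*H - 1)) / (2*H - 1) := by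
    apply intervalIntegral.integral_congr
    intro u hu
    rw [Set.uIcc_of_le hs] at hu
    have := inner_int (2*H - 2) hα hα' u t hu.1 (le_trans hu.2 hst)
    rw [show (2*H - 2) + 1 = 2*H - 1 by ring] at this
    exact this
  rw [hstep, intervalIntegral.integral_div]
  have i1 : IntervalIntegrable (fun u : ℝ => u ^ (2*H - 1)) volume 0 s :=
    intervalIntegrable_rpow' hβ
  have i2 : IntervalIntegrable (fun u : ℝ => (t - u) ^ (2*H - 1)) volume 0 s := by
    have := ((intervalIntegrable_rpow' (a := t - 0) (b := t - s) hβ).comp_sub_left t)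
    simpa using this
  rw [intervalIntegral.integral_add i1 i2]
  have e1 : (∫ u in (0:ℝ)..s, u ^ (2*H - 1)) = s ^ (2*H) / (2*H) := by
    rw [integral_rpow (Or.inl hβ), Real.zero_rpow (by linarith),
      show (2*H - 1) + 1 = 2*H by ring]
    ring
  have e2 : (∫ u in (0:ℝ)..s, (t - u) ^ (2*H - 1)) =
      (t ^ (2*H) - (t - s) ^ (2*H)) / (2*H) := by
    rw [intervalIntegral.integral_comp_sub_left (fun x => x ^ (2*H - 1)) t,
      show t - 0 = t by ring, integral_rpow (Or.inl hβ),
      show (2*H - 1) + 1 = 2*H by ring]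
  rw [e1, e2]
  field_simp
  ring
end
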